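/- Let A ≥ 0 be a real number, U(x) = 1 if x ≤ A and U(x) = 0 if x > A, and let X_1, …, X_n, Y_1, …, Y_n be mutually independent with X_j and Y_j both Poisson with mean θ_j > 0. Let S* = ∑_{j=1}^n Y_j·U(X_j), V(X) = ∑_{j=1}^n X_j·1{X_j ≤ ⌊A⌋ + 1}, and V*(X) = 0 if X_j ≥ ⌊A⌋ + 1 for all j and V*(X) = V(X) otherwise. Let W : ℝ → [0, ∞) be measurable with W(0) = 0 and W(t) > 0 for t > 0. Then for every θ ∈ (0, ∞)^n, E_θ[W(V*(X) − S*)] ≤ E_θ[W(V(X) − S*)], with strict inequality whenever E_θ[W(V(X) − S*)] < ∞; hence V(X) is an inadmissible predictor of S* under the loss W(a − S*). -/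

import Mathlib

/-!
On the event `E = {∀ j, X_j ≥ ⌊A⌋ + 1}` every `U(X_j)` vanishes, so `S* = 0` there; replacing
`V` by `0` on `E` turns the loss on `E` into `W 0 = 0` and leaves it unchanged elsewhere. The
risk drops strictly because `E` carries the outcome `X = (⌊A⌋ + 1, …, ⌊A⌋ + 1)`, `Y = 0`, which
has positive probability and on which `V` suffers the loss `W(n (⌊A⌋ + 1)) > 0`.
-/

/-- Poisson probability mass function with mean `θ`. -/
noncomputable def poissonPmf (θ : ℝ) (x : ℕ) : ℝ :=
  Real.exp (-θ) * θ ^ x / (Nat.factorial x : ℝ)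

/-- The prediction target `S* = ∑_j Y_j·U(X_j)` with `U(x) = 1{x ≤ A}`,
written as a function of the pair `(x, y)`. -/
noncomputable def predS (n : ℕ) (A : ℝ) (p : (Fin n → ℕ) × (Fin n → ℕ)) : ℝ :=
  ∑ j, ((p.2 j : ℝ)) * (if ((p.1 j : ℝ)) ≤ A then (1 : ℝ) else 0)

/-- Risk of the predictor `δ(X)` of `S* = ∑_j Y_j U(X_j)` under the loss
`W(a - S*)`, where `X_1, …, X_n, Y_1, …, Y_n` are mutually independent and
`X_j, Y_j` are Poisson with mean `θ_j`. -/
noncomputable def predRisk (n : ℕ) (A : ℝ) (θ : Fin n → ℝ) (W : ℝ → ℝ)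
    (δ : (Fin n → ℕ) → ℝ) : ENNReal :=
  ∑' p : (Fin n → ℕ) × (Fin n → ℕ),
    ENNReal.ofReal (W (δ p.1 - predS n A p) *
      ((∏ j, poissonPmf (θ j) (p.1 j)) * ∏ j, poissonPmf (θ j) (p.2 j)))

open Set

noncomputable def predLoss (n : ℕ) (A : ℝ) (θ : Fin n → ℝ) (W : ℝ → ℝ)
    (δ : (Fin n → ℕ) → ℝ) (p : (Fin n → ℕ) × (Fin n → ℕ)) : ENNReal :=
  ENNReal.ofReal (W (δ p.1 - predS n A p) *
    ((∏ j, poissonPmf (θ j) (p.1 j)) * ∏ j, poissonPmf (θ j) (p.2 j)))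

theorem predRisk_eq_tsum_predLoss (n : ℕ) (A : ℝ) (θ : Fin n → ℝ) (W : ℝ → ℝ)
    (δ : (Fin n → ℕ) → ℝ) : predRisk n A θ W δ = ∑' p, predLoss n A θ W δ p :=
  rfl

theorem poissonPmf_pos {θ : ℝ} (hθ : 0 < θ) (x : ℕ) : 0 < poissonPmf θ x := by
  unfold poissonPmf
  positivity

theorem predS_eq_zero_of_forall_lt {n : ℕ} {A : ℝ} {p : (Fin n → ℕ) × (Fin n → ℕ)}
    (h : ∀ j, A < p.1 j) : predS n A p = 0 :=
  Finset.sum_eq_zero fun j _ => by rw [if_neg (h j).not_ge, mul_zero]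

section ZeroOnEvent

variable {n : ℕ} {A : ℝ} {θ : Fin n → ℝ} {W : ℝ → ℝ} {δ : (Fin n → ℕ) → ℝ}
  {E : Set (Fin n → ℕ)}

theorem predLoss_indicator_compl_of_mem (hW0 : W 0 = 0) (hS : ∀ p, p.1 ∈ E → predS n A p = 0)
    {p : (Fin n → ℕ) × (Fin n → ℕ)} (hp : p.1 ∈ E) :
    predLoss n A θ W (Eᶜ.indicator δ) p = 0 := by
  rw [predLoss, indicator_of_notMem (notMem_compl_iff.mpr hp), hS p hp, sub_zero, hW0,
    zero_mul, ENNReal.ofReal_zero]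

theorem predLoss_indicator_compl_le (hW0 : W 0 = 0) (hS : ∀ p, p.1 ∈ E → predS n A p = 0)
    (p : (Fin n → ℕ) × (Fin n → ℕ)) :
    predLoss n A θ W (Eᶜ.indicator δ) p ≤ predLoss n A θ W δ p := by
  by_cases hp : p.1 ∈ E
  · rw [predLoss_indicator_compl_of_mem hW0 hS hp]
    exact zero_le
  · rw [predLoss, predLoss, indicator_of_mem (mem_compl hp)]

theorem predRisk_indicator_compl_le (hW0 : W 0 = 0) (hS : ∀ p, p.1 ∈ E → predS n A p = 0) :
    predRisk n A θ W (Eᶜ.indicator δ) ≤ predRisk n A θ W δ :=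
  ENNReal.tsum_le_tsum (predLoss_indicator_compl_le hW0 hS)

theorem predRisk_indicator_compl_lt (hW0 : W 0 = 0) (hS : ∀ p, p.1 ∈ E → predS n A p = 0)
    (hθ : ∀ j, 0 < θ j) {x : Fin n → ℕ} (hx : x ∈ E) (hWx : 0 < W (δ x))
    (hfin : predRisk n A θ W δ < ⊤) :
    predRisk n A θ W (Eᶜ.indicator δ) < predRisk n A θ W δ := by
  have hloss : 0 < predLoss n A θ W δ (x, 0) := by
    rw [predLoss, hS (x, 0) hx, sub_zero]
    exact ENNReal.ofReal_pos.mpr <| mul_pos hWx <|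
      mul_pos (Finset.prod_pos fun j _ => poissonPmf_pos (hθ j) _)
        (Finset.prod_pos fun j _ => poissonPmf_pos (hθ j) _)
  have hle := predRisk_indicator_compl_le (θ := θ) (δ := δ) hW0 hS
  simp only [predRisk_eq_tsum_predLoss] at hfin hle ⊢
  refine ENNReal.tsum_lt_tsum (hle.trans_lt hfin).ne (predLoss_indicator_compl_le hW0 hS)
    (i := (x, 0)) ?_
  rwa [predLoss_indicator_compl_of_mem hW0 hS hx]

end ZeroOnEvent

theorem poisson_V_inadmissible_prediction_general (n : ℕ) (hn : 0 < n) (A : ℝ)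
    (W : ℝ → ℝ)
    (hW0 : W 0 = 0) (hWpos : ∀ t : ℝ, 0 < t → 0 < W t)
    (V Vstar : (Fin n → ℕ) → ℝ)
    (hV : ∀ x, V x = ∑ j, (if x j ≤ Nat.floor A + 1 then ((x j : ℝ)) else 0))
    (hVstar : ∀ x, Vstar x = if ∀ j, Nat.floor A + 1 ≤ x j then 0 else V x)
    (θ : Fin n → ℝ) (hθ : ∀ j, 0 < θ j) :
    predRisk n A θ W Vstar ≤ predRisk n A θ W V ∧
      (predRisk n A θ W V < ⊤ →
        predRisk n A θ W Vstar < predRisk n A θ W V) := by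
  set m := Nat.floor A + 1
  set E : Set (Fin n → ℕ) := {x | ∀ j, m ≤ x j}
  have hS : ∀ p, p.1 ∈ E → predS n A p = 0 := fun p hp =>
    predS_eq_zero_of_forall_lt fun j => Nat.lt_of_floor_lt (hp j)
  have hVstar_eq : Vstar = Eᶜ.indicator V := by
    funext x
    by_cases hx : ∀ j, m ≤ x j
    · rw [hVstar, if_pos hx, indicator_of_notMem (notMem_compl_iff.mpr (show x ∈ E from hx))]
    · rw [hVstar, if_neg hx, indicator_of_mem (mem_compl (show x ∉ E from hx))]
  have hWcorner : 0 < W (V fun _ => m) := by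
    apply hWpos
    simp only [hV, le_refl, if_true, Finset.sum_const, Finset.card_univ, Fintype.card_fin,
      nsmul_eq_mul]
    positivity
  rw [hVstar_eq]
  exact ⟨predRisk_indicator_compl_le hW0 hS,
    predRisk_indicator_compl_lt hW0 hS hθ (x := fun _ => m) (fun _ => le_rfl) hWcorner⟩

/-- Remark 2.3: Robbins' estimator `V(X) = ∑_j X_j·1{X_j ≤ ⌊A⌋+1}` is an
inadmissible predictor of `S* = ∑_j Y_j U(X_j)`: the predictor `V*` vanishing
on `{∀ j, X_j ≥ ⌊A⌋+1}` and agreeing with `V` elsewhere is at least as good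
for every `θ ∈ (0,∞)^n`, and strictly better whenever the risk of `V` is
finite. -/
theorem poisson_V_inadmissible_prediction (n : ℕ) (hn : 0 < n) (A : ℝ) (hA : 0 ≤ A)
    (W : ℝ → ℝ) (hWmeas : Measurable W) (hWnonneg : ∀ t, 0 ≤ W t)
    (hW0 : W 0 = 0) (hWpos : ∀ t : ℝ, 0 < t → 0 < W t)
    (V Vstar : (Fin n → ℕ) → ℝ)
    (hV : ∀ x, V x = ∑ j, (if x j ≤ Nat.floor A + 1 then ((x j : ℝ)) else 0))
    (hVstar : ∀ x, Vstar x = if ∀ j, Nat.floor A + 1 ≤ x j then 0 else V x)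
    (θ : Fin n → ℝ) (hθ : ∀ j, 0 < θ j) :
    predRisk n A θ W Vstar ≤ predRisk n A θ W V ∧
      (predRisk n A θ W V < ⊤ →
        predRisk n A θ W Vstar < predRisk n A θ W V) :=
  poisson_V_inadmissible_prediction_general n hn A W hW0 hWpos V Vstar hV hVstar θ hθ
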